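/- arXiv:1606.04804 — 3 statements merged into one kernel-verified Lean document; each statement's English description precedes it below -/
import Mathlib

section
/- Let x : ℤ → ℂ be finitely supported and let a, b, c, d be reals with ad − bc = 1, b > 0. Then for every n ∈ ℤ, x[n] = ∫_{-πb}^{πb} L_{(a,b,c,d)}[x](ω) · conj(K_{(a,b,c,d)}(ω, n)) dω, where K_{(a,b,c,d)}(ω,t) = (2πb)^{-1/2} e^{-iπ/4} e^{(i/2)((a/b)t² − (2/b)ωt + (d/b)ω²)}. That is, the discrete-time linear canonical transform is inverted by integration against the conjugate kernel over [−πb, πb]. -/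
noncomputable def lctKernel (a b d : ℝ) (ω t : ℝ) : ℂ :=
  ((2 * Real.pi * b : ℝ) : ℂ) ^ (-(1/2) : ℂ) * Complex.exp (-(Complex.I * Real.pi / 4)) *
    Complex.exp ((Complex.I / 2) *
      (((a / b) * t ^ 2 - (2 / b) * ω * t + (d / b) * ω ^ 2 : ℝ) : ℂ))

noncomputable def dLCT (a b d : ℝ) (x : ℤ → ℂ) (ω : ℝ) : ℂ :=
  ∑' n : ℤ, x n * lctKernel a b d ω (n : ℝ)

noncomputable def dFourier (y : ℤ → ℂ) (ω : ℝ) : ℂ :=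
  ∑' n : ℤ, y n * Complex.exp (-(Complex.I * ω * (n : ℝ)))

noncomputable def acorr (y : ℤ → ℂ) (n : ℤ) : ℂ :=
  ∑' k : ℤ, y k * (starRingEnd ℂ) (y (k + n))

/-!
The kernels `ω ↦ K(ω, m)`, `m ∈ ℤ`, are orthonormal on `[-πb, πb]`: in
`K(ω, m) · conj K(ω, n) = (2πb)⁻¹ e^{i a (m² - n²) / (2b)} e^{-i (m - n) ω / b}` the chirp
`e^{i d ω² / (2b)}` cancels, and the remaining exponential runs over whole periods, so its integral
vanishes unless `m = n`. The transform of a finitely supported signal is a finite sum of kernels,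
so integrating it against `conj K(ω, n)` term by term picks out `x n`.
-/

open Complex Real ComplexConjugate

theorem integral_cexp_neg_I_int_div_mul {b : ℝ} (hb : b ≠ 0) (k : ℤ) :
    ∫ ω in -(π * b)..π * b, cexp (-(I * k / b) * ω) = if k = 0 then (2 * π * b : ℂ) else 0 := by
  split_ifs with hk
  · simp [hk]; ring
  have hb' : (b : ℂ) ≠ 0 := ofReal_ne_zero.mpr hb
  have hc : -(I * k / b) ≠ 0 := by simp [hk, hb, I_ne_zero]
  have hperiodic : cexp (-(I * k / b) * (π * b : ℝ)) = cexp (-(I * k / b) * (-(π * b) : ℝ)) :=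
    exp_eq_exp_iff_exists_int.mpr ⟨-k, by push_cast; field_simp; ring⟩
  rw [integral_exp_mul_complex hc, hperiodic, sub_self, zero_div]

variable {a b d : ℝ}

theorem lctKernel_mul_conj (hb : 0 < b) (ω s t : ℝ) :
    lctKernel a b d ω s * conj (lctKernel a b d ω t) =
      ((2 * π * b)⁻¹ : ℂ) * cexp ((a / (2 * b) * (s ^ 2 - t ^ 2) : ℝ) * I) *
        cexp (-(I * (s - t) / b) * ω) := by
  have hpos : 0 < 2 * π * b := by positivity
  set u := (2 * π * b) ^ (-(1 / 2) : ℝ)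
  have hu : ((2 * π * b : ℝ) : ℂ) ^ (-(1 / 2) : ℂ) = u := by
    rw [ofReal_cpow hpos.le]; norm_num
  have huu : (u : ℂ) * u = (2 * π * b : ℂ)⁻¹ := by
    rw [← ofReal_mul, ← rpow_add hpos]; norm_num [rpow_neg_one]
  have hexp : ∀ z₁ z₂ z₃ z₄ : ℂ,
      u * cexp z₁ * cexp z₂ * (u * cexp z₃ * cexp z₄) = u * u * cexp (z₁ + z₂ + z₃ + z₄) := by
    intros; simp only [Complex.exp_add]; ring
  unfold lctKernel
  rw [hu]
  simp only [map_mul, ← exp_conj, conj_ofReal]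
  rw [hexp, huu, mul_assoc (2 * π * b : ℂ)⁻¹, ← Complex.exp_add]
  congr 2
  simp only [map_neg, map_div₀, map_mul, conj_I, conj_ofReal, map_ofNat]
  push_cast
  field_simp
  ring

theorem integral_lctKernel_mul_conj (hb : 0 < b) (m n : ℤ) :
    ∫ ω in -(π * b)..π * b, lctKernel a b d ω m * conj (lctKernel a b d ω n) =
      if m = n then 1 else 0 := by
  have hcast : ((m : ℝ) : ℂ) - ((n : ℝ) : ℂ) = ((m - n : ℤ) : ℂ) := by push_cast; rfl
  simp_rw [lctKernel_mul_conj hb, hcast, intervalIntegral.integral_const_mul,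
    integral_cexp_neg_I_int_div_mul hb.ne', sub_eq_zero]
  split_ifs with hmn
  · subst hmn
    have hperiod : (2 * π * b : ℂ) ≠ 0 := by exact_mod_cast (by positivity : 2 * π * b ≠ 0)
    simp only [sub_self, mul_zero, ofReal_zero, zero_mul, Complex.exp_zero, mul_one]
    exact inv_mul_cancel₀ hperiod
  · simp

@[fun_prop]
theorem continuous_lctKernel (t : ℝ) : Continuous fun ω ↦ lctKernel a b d ω t := by
  unfold lctKernel; fun_prop

theorem dLCT_eq_sum {x : ℤ → ℂ} {s : Finset ℤ} (hs : Function.support x ⊆ s) (ω : ℝ) :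
    dLCT a b d x ω = ∑ m ∈ s, x m * lctKernel a b d ω m :=
  tsum_eq_sum fun m hm ↦ by rw [Function.notMem_support.mp (mt (@hs m) hm), zero_mul]

theorem dlct_inversion_general (x : ℤ → ℂ) (hx : (Function.support x).Finite)
    (a b d : ℝ) (hb : 0 < b) (n : ℤ) :
    x n = ∫ ω in (-(Real.pi * b))..(Real.pi * b),
      dLCT a b d x ω * (starRingEnd ℂ) (lctKernel a b d ω (n : ℝ)) := by
  have hs : Function.support x ⊆ ↑(insert n hx.toFinset) := fun m hm ↦
    Finset.mem_insert_of_mem (hx.mem_toFinset.mpr hm)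
  simp_rw [dLCT_eq_sum hs, Finset.sum_mul, mul_assoc]
  rw [intervalIntegral.integral_finsetSum fun m _ ↦
    (by fun_prop : Continuous _).intervalIntegrable _ _]
  simp_rw [intervalIntegral.integral_const_mul, integral_lctKernel_mul_conj hb, mul_ite, mul_one,
    mul_zero, Finset.sum_ite_eq', Finset.mem_insert_self, if_true]

theorem dlct_inversion (x : ℤ → ℂ) (hx : (Function.support x).Finite)
    (a b c d : ℝ) (habcd : a * d - b * c = 1) (hb : 0 < b) (n : ℤ) :
    x n = ∫ ω in (-(Real.pi * b))..(Real.pi * b),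
      dLCT a b d x ω * (starRingEnd ℂ) (lctKernel a b d ω (n : ℝ)) :=
  dlct_inversion_general x hx a b d hb n
end

section
/- Let x : ℤ → ℂ be finitely supported and let a, b, c, d be reals with ad − bc = 1, b ≠ 0. Then for every α ∈ ℝ and n₀ ∈ ℤ, the signal y[n] = e^{iα} e^{-i a n₀ n / b} x[n − n₀] satisfies |L_{(a,b,c,d)}[y](ω)| = |L_{(a,b,c,d)}[x](ω)| for all ω ∈ ℝ. -/
open Complex

theorem exp_mul_lctKernel_add (a b d ω t s : ℝ) :
    exp (-(I * a * s * (t + s) / b)) * lctKernel a b d ω (t + s) =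
      exp (-(((a / b * s ^ 2 / 2 + ω * s / b : ℝ) : ℂ) * I)) * lctKernel a b d ω t := by
  unfold lctKernel
  have hphase : exp (-(I * a * s * (t + s) / b)) *
        exp (I / 2 * (((a / b * (t + s) ^ 2 - 2 / b * ω * (t + s) + d / b * ω ^ 2 : ℝ)) : ℂ)) =
      exp (-(((a / b * s ^ 2 / 2 + ω * s / b : ℝ) : ℂ) * I)) *
        exp (I / 2 * (((a / b * t ^ 2 - 2 / b * ω * t + d / b * ω ^ 2 : ℝ)) : ℂ)) := by
    rw [← exp_add, ← exp_add]
    congr 1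
    push_cast
    ring
  linear_combination
    ((((2 * Real.pi * b : ℝ) : ℂ) ^ (-(1 / 2) : ℂ)) * exp (-(I * Real.pi / 4))) * hphase

theorem dLCT_const_mul (a b d : ℝ) (c : ℂ) (x : ℤ → ℂ) (ω : ℝ) :
    dLCT a b d (fun n => c * x n) ω = c * dLCT a b d x ω := by
  simp only [dLCT, mul_assoc, tsum_mul_left]

theorem dLCT_modulate_shift (a b d : ℝ) (x : ℤ → ℂ) (n₀ : ℤ) (ω : ℝ) :
    dLCT a b d (fun n => exp (-(I * a * n₀ * n / b)) * x (n - n₀)) ω =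
      exp (-(((a / b * n₀ ^ 2 / 2 + ω * n₀ / b : ℝ) : ℂ) * I)) * dLCT a b d x ω := by
  unfold dLCT
  rw [← tsum_mul_left, ← (Equiv.addRight n₀).tsum_eq]
  refine tsum_congr fun m => ?_
  have hkernel := exp_mul_lctKernel_add a b d ω m n₀
  simp only [Equiv.coe_addRight, add_sub_cancel_right]
  push_cast at hkernel ⊢
  linear_combination x m * hkernel

theorem dlct_intensity_rotation_shift_general (x : ℤ → ℂ)
    (a b d : ℝ) (α : ℝ) (n₀ : ℤ) (ω : ℝ) :
    ‖dLCT a b d (fun n => Complex.exp (Complex.I * (α : ℂ)) *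
        Complex.exp (-(Complex.I * (a : ℂ) * (n₀ : ℂ) * (n : ℂ) / (b : ℂ))) * x (n - n₀)) ω‖ =
      ‖dLCT a b d x ω‖ := by
  have hsignal : (fun n : ℤ => exp (I * α) * exp (-(I * a * n₀ * n / b)) * x (n - n₀)) =
      fun n : ℤ => exp (α * I) * (exp (-(I * a * n₀ * n / b)) * x (n - n₀)) := by
    simp only [mul_comm I, mul_assoc]
  rw [hsignal, dLCT_const_mul, dLCT_modulate_shift, norm_mul, norm_mul, norm_exp_ofReal_mul_I,
    ← neg_mul, ← ofReal_neg, norm_exp_ofReal_mul_I, one_mul, one_mul]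

theorem dlct_intensity_rotation_shift (x : ℤ → ℂ) (hx : (Function.support x).Finite)
    (a b c d : ℝ) (habcd : a * d - b * c = 1) (hb : b ≠ 0) (α : ℝ) (n₀ : ℤ) (ω : ℝ) :
    ‖dLCT a b d (fun n => Complex.exp (Complex.I * (α : ℂ)) *
        Complex.exp (-(Complex.I * (a : ℂ) * (n₀ : ℂ) * (n : ℂ) / (b : ℂ))) * x (n - n₀)) ω‖ =
      ‖dLCT a b d x ω‖ :=
  dlct_intensity_rotation_shift_general x a b d α n₀ ω
end

section
/- Let x : ℤ → ℂ be finitely supported and let a, b, c, d be reals with ad − bc = 1, b ≠ 0. Then the reflected signal y[n] = e^{-i a n²/b} · conj(x[−n]) satisfies |L_{(a,b,c,d)}[y](ω)| = |L_{(a,b,c,d)}[x](ω)| for all ω ∈ ℝ. -/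
/-!
The kernel factors as `lctKernel a b d ω 0 * lctPhase a b ω t`, a constant times a phase in `t`.
Multiplying the phase at `t` by the chirp `exp (-i a t² / b)` gives the conjugate of the phase at
`-t`, so after the substitution `n ↦ -n` the sum defining the transform of the reflected signal is
the conjugate of the sum defining the transform of `x`, times the same constant. Pulling out a
constant, conjugating and reindexing commute with `tsum` without any summability assumption.
-/

open Complex ComplexConjugate

noncomputable def lctPhase (a b ω t : ℝ) : ℂ :=
  exp (I / 2 * ((a / b * t ^ 2 - 2 / b * ω * t : ℝ) : ℂ))

lemma lctKernel_eq_mul_lctPhase (a b d ω t : ℝ) :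
    lctKernel a b d ω t = lctKernel a b d ω 0 * lctPhase a b ω t := by
  rw [lctKernel, lctKernel, lctPhase, mul_assoc (_ * _) (exp _) (exp _), ← exp_add]
  congr 2
  push_cast
  ring

lemma dLCT_eq_mul_tsum (a b d : ℝ) (x : ℤ → ℂ) (ω : ℝ) :
    dLCT a b d x ω = lctKernel a b d ω 0 * ∑' n : ℤ, x n * lctPhase a b ω n := by
  rw [dLCT, ← tsum_mul_left]
  congr 1 with n
  rw [lctKernel_eq_mul_lctPhase]
  ring

lemma exp_chirp_mul_lctPhase (a b ω t : ℝ) :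
    exp (-(I * a * t ^ 2 / b)) * lctPhase a b ω t = conj (lctPhase a b ω (-t)) := by
  simp only [lctPhase, ← exp_conj, ← exp_add, map_mul, map_div₀, conj_I, conj_ofReal, map_ofNat]
  congr 1
  push_cast
  ring

lemma tsum_reflect_mul_lctPhase (a b ω : ℝ) (x : ℤ → ℂ) :
    ∑' n : ℤ, exp (-(I * a * (n : ℂ) ^ 2 / b)) * conj (x (-n)) * lctPhase a b ω n =
      conj (∑' n : ℤ, x n * lctPhase a b ω n) := by
  rw [← (Equiv.neg ℤ).tsum_eq, conj_tsum]
  refine tsum_congr fun n => ?_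
  have hchirp := exp_chirp_mul_lctPhase a b ω (-n)
  rw [neg_neg] at hchirp
  rw [Equiv.neg_apply, neg_neg, map_mul, ← hchirp]
  push_cast
  ring

theorem dlct_intensity_reflection_general (x : ℤ → ℂ)
    (a b d : ℝ) (ω : ℝ) :
    ‖(dLCT a b d (fun n => Complex.exp (-(Complex.I * (a : ℂ) * (n : ℂ) ^ 2 / (b : ℂ))) *
        (starRingEnd ℂ) (x (-n))) ω)‖ =
      ‖dLCT a b d x ω‖ := by
  rw [dLCT_eq_mul_tsum, dLCT_eq_mul_tsum, tsum_reflect_mul_lctPhase, norm_mul, norm_mul,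
    norm_conj]

theorem dlct_intensity_reflection (x : ℤ → ℂ) (hx : (Function.support x).Finite)
    (a b c d : ℝ) (habcd : a * d - b * c = 1) (hb : b ≠ 0) (ω : ℝ) :
    ‖(dLCT a b d (fun n => Complex.exp (-(Complex.I * (a : ℂ) * (n : ℂ) ^ 2 / (b : ℂ))) *
        (starRingEnd ℂ) (x (-n))) ω)‖ =
      ‖dLCT a b d x ω‖ :=
  dlct_intensity_reflection_general x a b d ω
end
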